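/- arXiv:0711.3873 — 3 statements merged into one kernel-verified Lean document; each statement's English description precedes it below -/
import Mathlib

section
/- Let Y be a standard Gaussian random variable, β > 0, h > 0. Then the map q ↦ E[tanh²(β√q·Y + h)] has a unique fixed point q₂ in [0,1], and q₂ > 0. -/
/-!
Write `G(c) = E[tanh²(cY + h)]`, so that the fixed points are the `q` with `G(β√q) = q`.
Existence is the intermediate value theorem, as `G(0) = tanh² h > 0` and `G ≤ 1`; a fixed point
is positive since `q = 0` would force `tanh h = 0`. Uniqueness follows from `G(c) / c²` being
strictly decreasing on `c > 0`, because every fixed point satisfies `G(β√q) / (β√q)² = 1 / β²`.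
Differentiating under the integral, with `u = cY + h` and `t = tanh u`,
`c G'(c) - 2 G(c) = 2 E[t (u (1 - t²) - t)] - 2h E[t (1 - t²)]`.
The first expectation is negative since `u (1 - tanh² u) < tanh u` for `u > 0`
(this is `2u < sinh 2u`); the second is nonnegative since `t (1 - t²)` is an odd function of `u`,
nonnegative for `u ≥ 0`, and `u ~ N(h, c²)` has nonnegative mean.
-/

open MeasureTheory ProbabilityTheory Real Set Filter
open scoped NNReal

namespace Real

lemma hasDerivAt_tanh (x : ℝ) : HasDerivAt tanh (1 - tanh x ^ 2) x := by
  have hfun : tanh = fun y => sinh y / cosh y := funext tanh_eq_sinh_div_cosh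
  rw [hfun]
  refine ((hasDerivAt_sinh x).div (hasDerivAt_cosh x) (cosh_pos x).ne').congr_deriv ?_
  have := cosh_sq_sub_sinh_sq x
  field_simp

@[fun_prop]
lemma continuous_tanh : Continuous tanh :=
  continuous_iff_continuousAt.2 fun x => (hasDerivAt_tanh x).continuousAt

lemma tanh_pos {x : ℝ} (hx : 0 < x) : 0 < tanh x := by
  rw [tanh_eq_sinh_div_cosh]
  exact div_pos (sinh_pos_iff.2 hx) (cosh_pos x)

lemma tanh_nonneg {x : ℝ} (hx : 0 ≤ x) : 0 ≤ tanh x := by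
  rw [tanh_eq_sinh_div_cosh]
  exact div_nonneg (sinh_nonneg_iff.2 hx) (cosh_pos x).le

lemma mul_one_sub_tanh_sq_lt_tanh {x : ℝ} (hx : 0 < x) : x * (1 - tanh x ^ 2) < tanh x := by
  have h2x : 2 * x < 2 * sinh x * cosh x := by
    rw [← sinh_two_mul]; exact self_lt_sinh_iff.2 (by linarith)
  have hc := cosh_pos x
  rw [tanh_eq_sinh_div_cosh, ← sub_pos]
  have := cosh_sq_sub_sinh_sq x
  field_simp
  nlinarith

lemma abs_tanh_mul_one_sub_tanh_sq_le_one (x : ℝ) : |tanh x * (1 - tanh x ^ 2)| ≤ 1 := by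
  rw [abs_mul, abs_of_nonneg (sub_nonneg.2 (tanh_sq_lt_one x).le)]
  nlinarith [abs_tanh_lt_one x, sq_nonneg (tanh x), abs_nonneg (tanh x)]

lemma abs_tanh_mul_mul_one_sub_tanh_sq_sub_tanh_le (x : ℝ) :
    |tanh x * (x * (1 - tanh x ^ 2) - tanh x)| ≤ |x| + 1 :=
  calc |tanh x * (x * (1 - tanh x ^ 2) - tanh x)|
      = |x * (tanh x * (1 - tanh x ^ 2)) - tanh x ^ 2| := by ring_nf
    _ ≤ |x * (tanh x * (1 - tanh x ^ 2))| + |tanh x ^ 2| := abs_sub _ _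
    _ = |x| * |tanh x * (1 - tanh x ^ 2)| + tanh x ^ 2 := by rw [abs_mul, abs_sq]
    _ ≤ |x| + 1 := by
      nlinarith [abs_nonneg x, tanh_sq_lt_one x, abs_tanh_mul_one_sub_tanh_sq_le_one x]

lemma tanh_mul_mul_one_sub_tanh_sq_sub_tanh_neg {x : ℝ} (hx : x ≠ 0) :
    tanh x * (x * (1 - tanh x ^ 2) - tanh x) < 0 := by
  rcases hx.lt_or_gt with hx | hx
  · have h := mul_one_sub_tanh_sq_lt_tanh (neg_pos.2 hx)
    have ht := tanh_pos (neg_pos.2 hx)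
    rw [tanh_neg, neg_sq] at h
    rw [tanh_neg] at ht
    nlinarith
  · nlinarith [mul_one_sub_tanh_sq_lt_tanh hx, tanh_pos hx]

end Real

namespace MeasureTheory

lemma integral_pos_of_ae_pos {α : Type*} [MeasurableSpace α] {μ : Measure α}
    [NeZero μ] {f : α → ℝ} (hf : ∀ᵐ x ∂μ, 0 < f x) (hfi : Integrable f μ) :
    0 < ∫ x, f x ∂μ := by
  refine (integral_pos_iff_support_of_nonneg_ae (hf.mono fun _ h => h.le) hfi).2
    (pos_iff_ne_zero.2 fun h0 => ?_)
  have hzero : ∀ᵐ x ∂μ, f x = 0 := by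
    rw [ae_iff]; simpa [Function.support] using h0
  obtain ⟨x, hpos, hx⟩ := (hf.and hzero).exists
  exact hpos.ne' hx

lemma integrable_of_abs_le_affine {μ : Measure ℝ} [IsFiniteMeasure μ] (hμ : Integrable id μ)
    {g : ℝ → ℝ} (hg : AEStronglyMeasurable g μ) {a b : ℝ} (hab : ∀ y, |g y| ≤ a * |y| + b) :
    Integrable g μ :=
  ((hμ.norm.const_mul a).add (integrable_const b)).mono' hg
    (ae_of_all _ fun y => by simpa using hab y)

lemma hasDerivAt_integral_comp_mul {μ : Measure ℝ} (hμ : Integrable id μ) {f f' : ℝ → ℝ}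
    (hf : ∀ x, HasDerivAt f (f' x) x) (hf' : Continuous f') {C : ℝ} (hC : ∀ x, |f' x| ≤ C)
    {c : ℝ} (hfc : Integrable (fun y => f (c * y)) μ) :
    HasDerivAt (fun c => ∫ y, f (c * y) ∂μ) (∫ y, y * f' (c * y) ∂μ) c := by
  have hfcont : Continuous f := continuous_iff_continuousAt.2 fun x => (hf x).continuousAt
  refine (hasDerivAt_integral_of_dominated_loc_of_deriv_le (bound := fun y => C * |y|)
    (F := fun c y => f (c * y)) (F' := fun c y => y * f' (c * y)) univ_mem
    (Eventually.of_forall fun c' => ?_) hfc ?_ (ae_of_all _ fun y c' _ => ?_)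
    (hμ.norm.const_mul C) (ae_of_all _ fun y c' _ => ?_)).2
  · exact (hfcont.comp (continuous_const_mul c')).aestronglyMeasurable
  · exact (continuous_id.mul (hf'.comp (continuous_const_mul c))).aestronglyMeasurable
  · rw [norm_mul, Real.norm_eq_abs, Real.norm_eq_abs, mul_comm]
    exact mul_le_mul_of_nonneg_right (hC _) (abs_nonneg y)
  · exact ((hf (c' * y)).comp c' (hasDerivAt_mul_const y)).congr_deriv (mul_comm _ _)

end MeasureTheory

namespace ProbabilityTheory

variable {m : ℝ} {v : ℝ≥0}

lemma integrable_id_gaussianReal (m : ℝ) (v : ℝ≥0) : Integrable id (gaussianReal m v) :=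
  (memLp_id_gaussianReal 1).integrable le_rfl

lemma gaussianPDFReal_neg_apply (m : ℝ) (v : ℝ≥0) (x : ℝ) :
    gaussianPDFReal m v (-x) = gaussianPDFReal (-m) v x := by
  simp only [gaussianPDFReal_def]
  ring_nf

lemma gaussianPDFReal_neg_le (hm : 0 ≤ m) {x : ℝ} (hx : 0 ≤ x) :
    gaussianPDFReal (-m) v x ≤ gaussianPDFReal m v x := by
  simp only [gaussianPDFReal_def]
  refine mul_le_mul_of_nonneg_left (exp_le_exp.2 ?_) (by positivity)
  exact div_le_div_of_nonneg_right (by nlinarith [mul_nonneg hm hx]) (by positivity)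

lemma integral_gaussianReal_nonneg_of_odd (hm : 0 ≤ m) {φ : ℝ → ℝ}
    (hodd : ∀ x, φ (-x) = -φ x) (hφ : ∀ x, 0 ≤ x → 0 ≤ φ x)
    (hint : Integrable φ (gaussianReal m v)) :
    0 ≤ ∫ x, φ x ∂gaussianReal m v := by
  rcases eq_or_ne v 0 with rfl | hv
  · simpa using hφ m hm
  have hint' : Integrable φ (gaussianReal (-m) v) := by
    rw [← gaussianReal_map_neg]
    refine (integrable_map_equiv (MeasurableEquiv.neg ℝ) φ).2 ?_
    simpa [Function.comp_def, hodd] using hint.neg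
  have hreflect : ∫ x, φ x ∂gaussianReal (-m) v = -∫ x, φ x ∂gaussianReal m v := by
    rw [← gaussianReal_map_neg, ← integral_neg]
    simpa [hodd] using integral_map_equiv (MeasurableEquiv.neg ℝ) φ
  have hdensity : ∀ {μ : ℝ}, Integrable φ (gaussianReal μ v) →
      Integrable (fun x => gaussianPDFReal μ v x * φ x) := by
    intro μ h
    rw [gaussianReal_of_var_ne_zero _ hv, integrable_withDensity_iff_integrable_smul'
      (measurable_gaussianPDF μ v) (ae_of_all _ fun _ => gaussianPDF_lt_top)] at h
    simpa [toReal_gaussianPDF] using h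
  -- Both factors of the integrand below have the sign of `x`.
  have hdiff : 0 ≤ ∫ x, (gaussianPDFReal m v x - gaussianPDFReal (-m) v x) * φ x := by
    refine integral_nonneg fun x => show (0 : ℝ) ≤ _ from ?_
    rcases le_total 0 x with hx | hx
    · exact mul_nonneg (sub_nonneg.2 (gaussianPDFReal_neg_le hm hx)) (hφ x hx)
    · obtain ⟨y, rfl⟩ : ∃ y, x = -y := ⟨-x, (neg_neg x).symm⟩
      have hy : 0 ≤ y := neg_nonpos.1 hx
      rw [gaussianPDFReal_neg_apply, gaussianPDFReal_neg_apply, neg_neg, hodd]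
      nlinarith [gaussianPDFReal_neg_le (v := v) hm hy, hφ y hy]
  simp only [sub_mul] at hdiff
  rw [integral_sub (hdensity hint) (hdensity hint')] at hdiff
  simp only [integral_gaussianReal_eq_integral_smul hv, smul_eq_mul] at hreflect ⊢
  linarith

end ProbabilityTheory

section MeanTanhSq

local notation "γ" => gaussianReal 0 1

noncomputable def meanTanhSq (h c : ℝ) : ℝ := ∫ y, tanh (c * y + h) ^ 2 ∂γ

noncomputable def meanTanhSqDeriv (h c : ℝ) : ℝ :=
  ∫ y, y * (2 * tanh (c * y + h) * (1 - tanh (c * y + h) ^ 2)) ∂γ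

variable {h c : ℝ}

lemma integrable_comp_affine_of_abs_le {φ : ℝ → ℝ} (hφ : Continuous φ) {a b : ℝ}
    (hab : ∀ x, |φ x| ≤ a * |x| + b) (ha : 0 ≤ a) (c h : ℝ) :
    Integrable (fun y => φ (c * y + h)) γ := by
  refine integrable_of_abs_le_affine (integrable_id_gaussianReal 0 1)
    (by fun_prop : Continuous fun y => φ (c * y + h)).aestronglyMeasurable
    (a := a * |c|) (b := a * |h| + b) (fun y => (hab _).trans ?_)
  have := abs_add_le (c * y) h
  rw [abs_mul] at this
  nlinarith

lemma integrable_tanh_sq_comp_affine (c h : ℝ) :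
    Integrable (fun y => tanh (c * y + h) ^ 2) γ :=
  integrable_comp_affine_of_abs_le (φ := fun x => tanh x ^ 2) (by fun_prop) (a := 0)
    (fun x => by rw [zero_mul, zero_add, abs_sq]; exact (tanh_sq_lt_one x).le) le_rfl c h

lemma integrable_tanh_mul_sub_comp_affine (c h : ℝ) :
    Integrable (fun y => tanh (c * y + h) *
      ((c * y + h) * (1 - tanh (c * y + h) ^ 2) - tanh (c * y + h))) γ :=
  integrable_comp_affine_of_abs_le (φ := fun x => tanh x * (x * (1 - tanh x ^ 2) - tanh x))
    (by fun_prop) (fun x => by rw [one_mul]; exact abs_tanh_mul_mul_one_sub_tanh_sq_sub_tanh_le x)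
    zero_le_one c h

lemma hasDerivAt_meanTanhSq (h c : ℝ) :
    HasDerivAt (meanTanhSq h) (meanTanhSqDeriv h c) c := by
  refine hasDerivAt_integral_comp_mul (f := fun x => tanh (x + h) ^ 2)
    (f' := fun x => 2 * tanh (x + h) * (1 - tanh (x + h) ^ 2))
    (integrable_id_gaussianReal 0 1) (fun x => ?_) (by fun_prop) (C := 2) (fun x => ?_) ?_
  · refine (((hasDerivAt_tanh (x + h)).comp x ((hasDerivAt_id x).add_const h)).pow 2
      ).congr_deriv ?_
    simp only [Function.comp_apply, id, Nat.cast_ofNat, mul_one]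
    ring
  · have := abs_tanh_mul_one_sub_tanh_sq_le_one (x + h)
    rw [mul_assoc, abs_mul, abs_two]
    linarith
  · exact integrable_tanh_sq_comp_affine c h

lemma continuous_meanTanhSq (h : ℝ) : Continuous (meanTanhSq h) :=
  continuous_iff_continuousAt.2 fun c => (hasDerivAt_meanTanhSq h c).continuousAt

lemma meanTanhSq_zero (h : ℝ) : meanTanhSq h 0 = tanh h ^ 2 := by
  simp [meanTanhSq]

lemma meanTanhSq_le_one (h c : ℝ) : meanTanhSq h c ≤ 1 := by
  have : meanTanhSq h c ≤ ∫ _, (1 : ℝ) ∂γ :=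
    integral_mono_of_nonneg (ae_of_all _ fun _ => sq_nonneg _) (integrable_const 1)
      (ae_of_all _ fun y => (tanh_sq_lt_one _).le)
  simpa using this

lemma integral_tanh_mul_one_sub_tanh_sq_nonneg (c : ℝ) (hh : 0 ≤ h) :
    0 ≤ ∫ y, tanh (c * y + h) * (1 - tanh (c * y + h) ^ 2) ∂γ := by
  have hlaw := gaussianReal_add_const (gaussianReal_const_mul (HasLaw.id (μ := γ)) c) h
  have hcont : Continuous fun x => tanh x * (1 - tanh x ^ 2) := by fun_prop
  have hmap := hlaw.integral_comp hcont.aestronglyMeasurable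
  simp only [Function.comp_def, id] at hmap
  rw [hmap]
  refine integral_gaussianReal_nonneg_of_odd (by simpa using hh) (fun x => by simp [tanh_neg])
    (fun x hx => mul_nonneg (tanh_nonneg hx) (sub_nonneg.2 (tanh_sq_lt_one x).le)) ?_
  exact Integrable.of_bound hcont.aestronglyMeasurable 1
    (ae_of_all _ fun x => abs_tanh_mul_one_sub_tanh_sq_le_one x)

lemma integral_tanh_mul_sub_neg (hc : c ≠ 0) :
    ∫ y, tanh (c * y + h) * ((c * y + h) * (1 - tanh (c * y + h) ^ 2) - tanh (c * y + h)) ∂γ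
      < 0 := by
  have := nullSingletonClass_gaussianReal (μ := 0) one_ne_zero
  have hpos : ∀ᵐ y ∂γ,
      0 < -(tanh (c * y + h) * ((c * y + h) * (1 - tanh (c * y + h) ^ 2) - tanh (c * y + h))) :=
    (Measure.ae_ne γ (-h / c)).mono fun y hy => neg_pos.2 <|
      tanh_mul_mul_one_sub_tanh_sq_sub_tanh_neg fun h0 => hy (by field_simp; linarith)
  have := integral_pos_of_ae_pos hpos (integrable_tanh_mul_sub_comp_affine c h).neg
  rw [integral_neg] at this
  linarith

lemma mul_deriv_meanTanhSq_sub_lt (hc : 0 < c) (hh : 0 < h) :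
    c * meanTanhSqDeriv h c - 2 * meanTanhSq h c < 0 := by
  have hψ := integral_tanh_mul_one_sub_tanh_sq_nonneg c hh.le
  have hρ := integral_tanh_mul_sub_neg (h := h) hc.ne'
  have hψi := integrable_comp_affine_of_abs_le (φ := fun x => tanh x * (1 - tanh x ^ 2))
    (by fun_prop) (fun x => by rw [zero_mul, zero_add]; exact abs_tanh_mul_one_sub_tanh_sq_le_one x)
    le_rfl c h
  have hDi : Integrable (fun y => y * (2 * tanh (c * y + h) * (1 - tanh (c * y + h) ^ 2))) γ := by
    refine integrable_of_abs_le_affine (integrable_id_gaussianReal 0 1) (by fun_prop) (a := 2)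
      (b := 0) fun y => ?_
    rw [abs_mul, mul_assoc, abs_mul, abs_two]
    nlinarith [abs_tanh_mul_one_sub_tanh_sq_le_one (c * y + h), abs_nonneg y]
  have hsplit : c * meanTanhSqDeriv h c - 2 * meanTanhSq h c
      = 2 * (∫ y, tanh (c * y + h) * ((c * y + h) * (1 - tanh (c * y + h) ^ 2)
          - tanh (c * y + h)) ∂γ)
        - 2 * h * ∫ y, tanh (c * y + h) * (1 - tanh (c * y + h) ^ 2) ∂γ := by
    rw [meanTanhSqDeriv, meanTanhSq, ← integral_const_mul, ← integral_const_mul,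
      ← integral_const_mul, ← integral_const_mul,
      ← integral_sub (hDi.const_mul c) ((integrable_tanh_sq_comp_affine c h).const_mul 2),
      ← integral_sub ((integrable_tanh_mul_sub_comp_affine c h).const_mul 2)
        (hψi.const_mul (2 * h))]
    congr 1 with y
    ring
  rw [hsplit]
  nlinarith [mul_nonneg hh.le hψ]

lemma strictAntiOn_meanTanhSq_div_sq (hh : 0 < h) :
    StrictAntiOn (fun c => meanTanhSq h c / c ^ 2) (Ioi 0) := by
  refine strictAntiOn_of_hasDerivWithinAt_neg (convex_Ioi 0) (f' := fun c =>
      (meanTanhSqDeriv h c * c ^ 2 - meanTanhSq h c * (2 * c)) / (c ^ 2) ^ 2)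
    (fun c hc => ((hasDerivAt_meanTanhSq h c).continuousAt.div (continuousAt_id.pow 2)
      (pow_pos hc 2).ne').continuousWithinAt) (fun c hc => ?_) (fun c hc => ?_)
  · rw [interior_Ioi] at hc
    refine (((hasDerivAt_meanTanhSq h c).div (hasDerivAt_pow 2 c)
      (pow_pos hc 2).ne')).hasDerivWithinAt.congr_deriv ?_
    norm_num
  · rw [interior_Ioi] at hc
    have hc : 0 < c := hc
    have := mul_deriv_meanTanhSq_sub_lt hc hh
    refine div_neg_of_neg_of_pos ?_ (by positivity)
    nlinarith

lemma exists_meanTanhSq_sqrt_eq (β h : ℝ) : ∃ q ∈ Icc (0 : ℝ) 1, meanTanhSq h (β * √q) = q := by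
  have hcont : Continuous fun q => meanTanhSq h (β * √q) - q := by
    have := continuous_meanTanhSq h
    fun_prop
  obtain ⟨q, hq, hzero⟩ := intermediate_value_Icc' zero_le_one hcont.continuousOn
    ⟨sub_nonpos.2 (meanTanhSq_le_one h _), by simp [meanTanhSq_zero, sq_nonneg]⟩
  exact ⟨q, hq, sub_eq_zero.1 hzero⟩

lemma pos_of_meanTanhSq_sqrt_eq (β : ℝ) (hh : 0 < h) {q : ℝ} (hq : 0 ≤ q)
    (hfix : meanTanhSq h (β * √q) = q) : 0 < q := by
  refine hq.lt_of_ne fun hq0 => ?_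
  subst hq0
  simp [meanTanhSq_zero, (tanh_pos hh).ne'] at hfix

lemma eq_of_meanTanhSq_sqrt_eq {β : ℝ} (hβ : 0 < β) (hh : 0 < h) {q q' : ℝ} (hq : 0 < q)
    (hq' : 0 < q') (hfix : meanTanhSq h (β * √q) = q) (hfix' : meanTanhSq h (β * √q') = q') :
    q = q' := by
  have hratio {p : ℝ} (hp : 0 < p) (hfix : meanTanhSq h (β * √p) = p) :
      meanTanhSq h (β * √p) / (β * √p) ^ 2 = 1 / β ^ 2 := by
    rw [hfix, mul_pow, sq_sqrt hp.le]
    field_simp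
  have := (strictAntiOn_meanTanhSq_div_sq hh).injOn (mul_pos hβ (sqrt_pos.2 hq))
    (mul_pos hβ (sqrt_pos.2 hq')) ((hratio hq hfix).trans (hratio hq' hfix').symm)
  rwa [mul_right_inj' hβ.ne', sqrt_inj hq.le hq'.le] at this

end MeanTanhSq

open MeasureTheory ProbabilityTheory in
/-- Latała–Guerra: for `β, h > 0` the map `q ↦ E[tanh²(β√q Y + h)]` has a
unique fixed point in `[0,1]`, and this fixed point is positive. -/
theorem stmt_7 (β h : ℝ) (hβ : 0 < β) (hh : 0 < h) :
    ∃ q₂ : ℝ, 0 < q₂ ∧ q₂ ∈ Set.Icc (0 : ℝ) 1 ∧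
      (∫ y, Real.tanh (β * Real.sqrt q₂ * y + h) ^ 2 ∂(gaussianReal 0 1)) = q₂ ∧
      ∀ q : ℝ, q ∈ Set.Icc (0 : ℝ) 1 →
        (∫ y, Real.tanh (β * Real.sqrt q * y + h) ^ 2 ∂(gaussianReal 0 1)) = q →
        q = q₂ := by
  change ∃ q₂ : ℝ, 0 < q₂ ∧ q₂ ∈ Icc (0 : ℝ) 1 ∧ meanTanhSq h (β * √q₂) = q₂ ∧
    ∀ q ∈ Icc (0 : ℝ) 1, meanTanhSq h (β * √q) = q → q = q₂
  obtain ⟨q₂, hq₂, hfix₂⟩ := exists_meanTanhSq_sqrt_eq β h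
  have hpos₂ := pos_of_meanTanhSq_sqrt_eq β hh hq₂.1 hfix₂
  refine ⟨q₂, hpos₂, hq₂, hfix₂, fun q hq hfix => ?_⟩
  exact eq_of_meanTanhSq_sqrt_eq hβ hh
    (pos_of_meanTanhSq_sqrt_eq β hh hq.1 hfix) hpos₂ hfix hfix₂
end

section
/- Let n ∈ ℕ and let ε^1, …, ε^n be independent {-1,1}-valued random variables with common mean m, and let S, ζ(S) ⊆ {1,…,n} be disjoint collections of distinct indices with |S| ≥ 3, together with further distinct indices η(1),…,η(p) and a pair ℓ ≠ ℓ' from {1,…,n}. Then E[∏_{r∈S}(ε^r − ε^{ζ(r)}) ∏_{l=1}^{p} ε^{η(l)} ε^{ℓ} ε^{ℓ'}] = 0. -/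
/-!
Choose `r₀ ∈ S` with `r₀, ζ r₀ ∉ {ℓ, ℓ'}`; it exists because `|S| ≥ 3` and the pairs
`{r, ζ r}` are disjoint. Since `ε² = 1`, the integrand is `(ε r₀ - ε (ζ r₀)) * H` with `H` a
function of the other spins, so by independence its mean is `(m - m) * E[H] = 0`.

The spins are not assumed measurable. Either the integrand is a.e. zero or not a.e.-measurable
(and its integral is `0` anyway), or every spin it depends on is a.e.-measurable: independence,
which holds for outer measures, makes a spin null-measurable as soon as flipping it changes the
integrand on a cell of positive outer measure.
-/

open MeasureTheory ProbabilityTheory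
open scoped symmDiff

lemma Finset.prod_symmDiff_of_mul_self_eq_one {α M : Type*} [DecidableEq α] [CommMonoid M]
    {f : α → M} (hf : ∀ a, f a * f a = 1) (s t : Finset α) :
    ∏ a ∈ s ∆ t, f a = (∏ a ∈ s, f a) * ∏ a ∈ t, f a := by
  have hsq : (∏ a ∈ s ∩ t, f a) * ∏ a ∈ s ∩ t, f a = 1 := by
    rw [← Finset.prod_mul_distrib]; simp [hf]
  rw [Finset.symmDiff_def, Finset.prod_union disjoint_sdiff_sdiff,
    ← s.prod_inter_mul_prod_sdiff t, ← t.prod_inter_mul_prod_sdiff s, Finset.inter_comm t s,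
    mul_mul_mul_comm, hsq, one_mul]

lemma Finset.exists_mem_notMem_of_card_lt {ι : Type*} [DecidableEq ι] {S Q : Finset ι}
    {ζ : ι → ι} (hζ : Set.InjOn ζ S) (hSζ : Disjoint S (S.image ζ)) (hQ : Q.card < S.card) :
    ∃ r ∈ S, r ∉ Q ∧ ζ r ∉ Q := by
  by_contra! h
  have hζS : ∀ r ∈ S, ∀ r' ∈ S, r ≠ ζ r' := fun r hr r' hr' he =>
    Finset.disjoint_left.1 hSζ hr (he ▸ Finset.mem_image_of_mem ζ hr')
  refine hQ.not_ge (Finset.card_le_card_of_injOn (fun r => if r ∈ Q then r else ζ r)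
    (fun r hr => ?_) fun r hr r' hr' he => ?_)
  · dsimp only
    split_ifs with hrQ
    exacts [hrQ, h r hr hrQ]
  · dsimp only at he
    split_ifs at he
    exacts [he, (hζS r hr r' hr' he).elim, (hζS r' hr' r hr he.symm).elim, hζ hr hr' he]

section PairDiffProd

variable {ι : Type*}

def pairDiffProd (S : Finset ι) (ζ : ι → ι) (M : Finset ι) (x : ι → ℝ) : ℝ :=
  (∏ r ∈ S, (x r - x (ζ r))) * ∏ v ∈ M, x v

variable {S M : Finset ι} {ζ : ι → ι}

lemma measurable_pairDiffProd : Measurable (pairDiffProd S ζ M) := by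
  unfold pairDiffProd; fun_prop

variable [DecidableEq ι]

def pairSupport (S : Finset ι) (ζ : ι → ι) (M : Finset ι) : Finset ι := S ∪ S.image ζ ∪ M

lemma mem_pairSupport_of_mem {r : ι} (hr : r ∈ S) : r ∈ pairSupport S ζ M := by
  simp [pairSupport, hr]

lemma image_mem_pairSupport {r : ι} (hr : r ∈ S) : ζ r ∈ pairSupport S ζ M :=
  Finset.mem_union_left _ (Finset.mem_union_right _ (Finset.mem_image_of_mem ζ hr))

lemma mem_pairSupport_of_mem_right {v : ι} (hv : v ∈ M) : v ∈ pairSupport S ζ M :=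
  Finset.mem_union_right _ hv

lemma dependsOn_pairDiffProd : DependsOn (pairDiffProd S ζ M) (pairSupport S ζ M : Set ι) := by
  intro x y h
  have hS : ∀ r ∈ S, x r - x (ζ r) = y r - y (ζ r) := fun r hr => by
    rw [h r (mem_pairSupport_of_mem hr), h (ζ r) (image_mem_pairSupport hr)]
  unfold pairDiffProd
  rw [Finset.prod_congr rfl hS,
    Finset.prod_congr rfl fun v hv => h v (mem_pairSupport_of_mem_right hv)]

lemma pairDiffProd_eq_mul_erase {a : ι} (ha : a ∈ S) (x : ι → ℝ) :
    pairDiffProd S ζ M x = (x a - x (ζ a)) * pairDiffProd (S.erase a) ζ M x := by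
  unfold pairDiffProd
  rw [← Finset.mul_prod_erase S _ ha, mul_assoc]

lemma pairDiffProd_eq_zero {x : ι → ℝ} {r : ι} (hr : r ∈ S) (hx : x r = x (ζ r)) :
    pairDiffProd S ζ M x = 0 := by
  rw [pairDiffProd_eq_mul_erase hr, hx, sub_self, zero_mul]

lemma neg_eq_of_ne_of_sign {a b : ℝ} (ha : a = -1 ∨ a = 1) (hb : b = -1 ∨ b = 1) (h : a ≠ b) :
    b = -a := by
  rcases ha with rfl | rfl <;> rcases hb with rfl | rfl <;> norm_num at *

-- A flip inside a pair kills that pair's factor; any other flip changes the sign.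
lemma pairDiffProd_ne_of_flip (hSζ : Disjoint S (S.image ζ)) {x y : ι → ℝ}
    (hx : ∀ v, x v = -1 ∨ x v = 1) (hy : ∀ v, y v = -1 ∨ y v = 1)
    (hΦ : pairDiffProd S ζ M x ≠ 0) {k : ι} (hk : k ∈ pairSupport S ζ M)
    (hxy : ∀ v ∈ (pairSupport S ζ M).erase k, y v = x v) (hk' : y k ≠ x k) :
    pairDiffProd S ζ M y ≠ pairDiffProd S ζ M x := by
  have hyk : y k = -x k := neg_eq_of_ne_of_sign (hx k) (hy k) hk'.symm
  have hpair : ∀ r ∈ S, x (ζ r) = -x r := fun r hr =>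
    neg_eq_of_ne_of_sign (hx r) (hx (ζ r)) fun h => hΦ (pairDiffProd_eq_zero hr h)
  have hζS : ∀ r ∈ S, ζ r ∉ S := fun r hr h =>
    Finset.disjoint_left.1 hSζ h (Finset.mem_image_of_mem ζ hr)
  have hagree : ∀ v ∈ pairSupport S ζ M, v ≠ k → y v = x v := fun v hv hvk =>
    hxy v (Finset.mem_erase.2 ⟨hvk, hv⟩)
  by_cases hkS : k ∈ S ∨ k ∈ S.image ζ
  · refine fun h => hΦ (h ▸ ?_)
    rcases hkS with hkS | hkζ
    · refine pairDiffProd_eq_zero hkS ?_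
      rw [hagree (ζ k) (image_mem_pairSupport hkS) fun h => hζS k hkS (h.symm ▸ hkS),
        hpair k hkS, hyk]
    · obtain ⟨r, hr, rfl⟩ := Finset.mem_image.1 hkζ
      refine pairDiffProd_eq_zero hr ?_
      rw [hagree r (mem_pairSupport_of_mem hr) fun h => hζS r hr (h ▸ hr), hyk, hpair r hr,
        neg_neg]
  · push Not at hkS
    have hkM : k ∈ M := by simpa [pairSupport, hkS.1, hkS.2] using hk
    have hflip : pairDiffProd S ζ M y = -pairDiffProd S ζ M x := by
      have hS : ∀ r ∈ S, y r - y (ζ r) = x r - x (ζ r) := fun r hr => by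
        rw [hagree r (mem_pairSupport_of_mem hr) fun h => hkS.1 (h ▸ hr),
          hagree (ζ r) (image_mem_pairSupport hr)
            fun h => hkS.2 (h ▸ Finset.mem_image_of_mem ζ hr)]
      unfold pairDiffProd
      rw [Finset.prod_congr rfl hS, ← Finset.mul_prod_erase M _ hkM,
        ← Finset.mul_prod_erase M _ hkM, hyk, Finset.prod_congr rfl fun v hv =>
          hagree v (mem_pairSupport_of_mem_right (Finset.mem_of_mem_erase hv))
            (Finset.ne_of_mem_erase hv)]
      ring
    rw [hflip]
    exact fun h => hΦ (by linarith)

end PairDiffProd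

namespace MeasureTheory

variable {Ω : Type*} [MeasurableSpace Ω] {μ : Measure Ω}

lemma NullMeasurableSet.of_measure_add_measure_compl_le_one [IsProbabilityMeasure μ]
    {P : Set Ω} (h : μ P + μ Pᶜ ≤ 1) : NullMeasurableSet P μ := by
  set T := toMeasurable μ P
  have hT : MeasurableSet T := measurableSet_toMeasurable μ P
  have hPT : P ⊆ T := subset_toMeasurable μ P
  have hgap : μ (T \ P) + 1 ≤ 0 + 1 := by
    calc μ (T \ P) + 1 = μ (Pᶜ ∩ T) + (μ Tᶜ + μ T) := by
          rw [Set.sdiff_eq_compl_inter, add_comm (μ Tᶜ), prob_add_prob_compl hT]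
      _ = μ Pᶜ + μ P := by
          rw [measure_toMeasurable, ← add_assoc, ← measure_inter_add_sdiff Pᶜ hT,
            Set.sdiff_eq, Set.inter_eq_right.2 (Set.compl_subset_compl.2 hPT)]
      _ ≤ 0 + 1 := by rw [zero_add, add_comm]; exact h
  have hnull : μ (T \ P) = 0 := nonpos_iff_eq_zero.1 <|
    (ENNReal.add_le_add_iff_right ENNReal.one_ne_top).1 hgap
  refine hT.nullMeasurableSet.congr (ae_eq_set.2 ⟨hnull, ?_⟩)
  rw [Set.sdiff_eq_empty.2 hPT, measure_empty]

lemma NullMeasurableSet.of_measure_inter_eq_mul [IsProbabilityMeasure μ] {P C E : Set Ω}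
    (hE : NullMeasurableSet E μ) (hPE : P ∩ C ⊆ E) (hPcE : Pᶜ ∩ C ⊆ Eᶜ) (hC : μ C ≠ 0)
    (hPC : μ (P ∩ C) = μ P * μ C) (hPcC : μ (Pᶜ ∩ C) = μ Pᶜ * μ C) :
    NullMeasurableSet P μ := by
  refine of_measure_add_measure_compl_le_one <|
    (ENNReal.mul_le_mul_iff_left hC (measure_ne_top μ C)).1 ?_
  calc (μ P + μ Pᶜ) * μ C = μ (P ∩ C) + μ (Pᶜ ∩ C) := by rw [add_mul, hPC, hPcC]
    _ ≤ μ (C ∩ E) + μ (C \ E) :=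
        add_le_add (measure_mono fun ω hω => ⟨hω.2, hPE hω⟩)
          (measure_mono fun ω hω => ⟨hω.2, hPcE hω⟩)
    _ = 1 * μ C := by rw [measure_inter_add_sdiff₀ C hE, one_mul]

lemma ae_measure_preimage_singleton_ne_zero {β : Type*} {f : Ω → β}
    (hf : (Set.range f).Countable) : ∀ᵐ ω ∂μ, μ (f ⁻¹' {f ω}) ≠ 0 := by
  rw [ae_iff]
  push Not
  refine measure_mono_null (t := ⋃ y ∈ {y ∈ Set.range f | μ (f ⁻¹' {y}) = 0}, f ⁻¹' {y})
    (fun ω hω => Set.mem_biUnion ⟨⟨ω, rfl⟩, hω⟩ rfl) ?_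
  exact (measure_biUnion_null_iff (hf.mono (Set.sep_subset _ _))).2 fun y hy => hy.2

lemma aemeasurable_of_nullMeasurableSet_preimage {f : Ω → ℝ} {a b : ℝ}
    (hf : ∀ ω, f ω = a ∨ f ω = b) (ha : NullMeasurableSet (f ⁻¹' {a}) μ) :
    AEMeasurable f μ := by
  have hfab : f = fun ω => (f ⁻¹' {a}).indicator (fun _ => a - b) ω + b := by
    funext ω
    by_cases hω : f ω = a
    · simp [hω]
    · simp [Set.indicator_of_notMem (show ω ∉ f ⁻¹' {a} from hω), (hf ω).resolve_left hω]
  rw [hfab]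
  exact (aemeasurable_const.indicator₀ ha).add_const b

end MeasureTheory

namespace ProbabilityTheory

variable {Ω : Type*} [MeasurableSpace Ω] {μ : Measure Ω} {ι : Type*} [DecidableEq ι]
  {ε : ι → Ω → ℝ}

lemma iIndepFun.measure_preimage_inter_biInter (hind : iIndepFun ε μ) {k : ι} {W : Finset ι}
    (hk : k ∉ W) {B : Set ℝ} (hB : MeasurableSet B) (c : ι → ℝ) :
    μ (ε k ⁻¹' B ∩ ⋂ v ∈ W, ε v ⁻¹' {c v}) = μ (ε k ⁻¹' B) * μ (⋂ v ∈ W, ε v ⁻¹' {c v}) := by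
  set sets := Function.update (fun v => ({c v} : Set ℝ)) k B
  have hsets : ∀ v ∈ W, sets v = {c v} := fun v hv =>
    Function.update_of_ne (ne_of_mem_of_not_mem hv hk) _ _
  have hmeas : ∀ v ∈ insert k W, MeasurableSet (sets v) := by
    intro v _
    by_cases hv : v = k
    · subst hv; simpa [sets] using hB
    · simp [sets, hv]
  have h := hind.measure_inter_preimage_eq_mul (insert k W) hmeas
  rw [Finset.set_biInter_insert, Finset.prod_insert hk, show sets k = B from
    Function.update_self .., Finset.prod_congr rfl fun v hv => by rw [hsets v hv],
    ← hind.measure_inter_preimage_eq_mul W fun v _ => measurableSet_singleton (c v)] at h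
  rwa [Set.iInter₂_congr fun v hv => by rw [hsets v hv]] at h

lemma iIndepFun.nullMeasurableSet_preimage_of_sensitive (hind : iIndepFun ε μ) {G : Ω → ℝ}
    (hG : AEMeasurable G μ) {V : Finset ι} {ω₀ : Ω}
    (hω₀ : ∀ v ∈ V, μ (ε v ⁻¹' {ε v ω₀}) ≠ 0) {k : ι} (hk : k ∈ V)
    (hconst : ∀ ω, (∀ v ∈ V, ε v ω = ε v ω₀) → G ω = G ω₀)
    (hflip : ∀ ω, (∀ v ∈ V.erase k, ε v ω = ε v ω₀) → ε k ω ≠ ε k ω₀ → G ω ≠ G ω₀) :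
    NullMeasurableSet (ε k ⁻¹' {ε k ω₀}) μ := by
  have := hind.isProbabilityMeasure
  have hcell {B : Set ℝ} (hB : MeasurableSet B) :=
    hind.measure_preimage_inter_biInter (Finset.notMem_erase k V) hB fun v => ε v ω₀
  refine NullMeasurableSet.of_measure_inter_eq_mul
    (hG.nullMeasurableSet_preimage (measurableSet_singleton (G ω₀))) ?_ ?_ ?_
    (hcell (measurableSet_singleton _)) ?_
  · rintro ω ⟨hωk, hωC⟩
    refine hconst ω fun v hv => ?_
    by_cases hvk : v = k
    · subst hvk; exact hωk
    · exact Set.mem_iInter₂.1 hωC v (Finset.mem_erase.2 ⟨hvk, hv⟩)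
  · rintro ω ⟨hωk, hωC⟩
    exact hflip ω (Set.mem_iInter₂.1 hωC) hωk
  · rw [hind.measure_inter_preimage_eq_mul _ fun v _ => measurableSet_singleton _]
    exact Finset.prod_ne_zero_iff.2 fun v hv => hω₀ v (Finset.mem_of_mem_erase hv)
  · rw [← Set.preimage_compl]
    exact hcell (measurableSet_singleton _).compl

lemma iIndepFun.indepFun_of_dependsOn (hind : iIndepFun ε μ) {A B : Finset ι}
    (hAB : Disjoint A B) (hmeas : ∀ v ∈ A ∪ B, AEMeasurable (ε v) μ)
    {F₁ F₂ : (ι → ℝ) → ℝ} (hF₁ : Measurable F₁) (hF₂ : Measurable F₂)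
    (hA : DependsOn F₁ (A : Set ι)) (hB : DependsOn F₂ (B : Set ι)) :
    IndepFun (fun ω => F₁ (ε · ω)) (fun ω => F₂ (ε · ω)) μ := by
  set U := A ∪ B
  have hU : iIndepFun (fun i : U => ε i) μ := hind.precomp Subtype.val_injective
  have key := hU.indepFun_finset₀ (A.subtype (· ∈ U)) (B.subtype (· ∈ U))
    (Finset.disjoint_left.2 fun i hiA hiB =>
      Finset.disjoint_left.1 hAB (Finset.mem_subtype.1 hiA) (Finset.mem_subtype.1 hiB))
    fun i => hmeas i i.2
  have factor : ∀ D ⊆ U, ∀ F : (ι → ℝ) → ℝ, Measurable F → DependsOn F (D : Set ι) →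
      ∃ g : (D.subtype (· ∈ U) → ℝ) → ℝ, Measurable g ∧
        ∀ ω, F (ε · ω) = g fun i => ε i ω := by
    intro D hD F hF hDF
    refine ⟨fun y => F fun v => if h : v ∈ D then y ⟨⟨v, hD h⟩, Finset.mem_subtype.2 h⟩ else 0,
      hF.comp (measurable_pi_lambda _ fun v => ?_), fun ω => hDF fun v hv => ?_⟩
    · by_cases h : v ∈ D
      · simpa only [h, dif_pos] using measurable_pi_apply _
      · simpa only [h, dif_neg, not_false_eq_true] using measurable_const
    · simp [Finset.mem_coe.1 hv]
  obtain ⟨g₁, hg₁, h₁⟩ := factor A Finset.subset_union_left F₁ hF₁ hA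
  obtain ⟨g₂, hg₂, h₂⟩ := factor B Finset.subset_union_right F₂ hF₂ hB
  convert key.comp hg₁ hg₂ using 1 <;> funext ω
  exacts [h₁ ω, h₂ ω]

variable {S M : Finset ι} {ζ : ι → ι}

lemma aemeasurable_pairDiffProd (hmeas : ∀ v ∈ pairSupport S ζ M, AEMeasurable (ε v) μ) :
    AEMeasurable (fun ω => pairDiffProd S ζ M (ε · ω)) μ := by
  unfold pairDiffProd
  refine (Finset.aemeasurable_fun_prod _ fun r hr => ?_).mul
    (Finset.aemeasurable_fun_prod _ fun v hv => hmeas v (mem_pairSupport_of_mem_right hv))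
  exact (hmeas r (mem_pairSupport_of_mem hr)).sub (hmeas (ζ r) (image_mem_pairSupport hr))

/-- Pick `ω₀` where the integrand does not vanish and whose spin values all have positive outer
measure; flipping a single spin at `ω₀` changes the integrand, so its level sets separate the two
values of that spin on a non-null cell. -/
lemma iIndepFun.aemeasurable_of_pairDiffProd (hval : ∀ i ω, ε i ω = -1 ∨ ε i ω = 1)
    (hind : iIndepFun ε μ) (hSζ : Disjoint S (S.image ζ))
    (hGm : AEMeasurable (fun ω => pairDiffProd S ζ M (ε · ω)) μ)
    (hG0 : ¬ (fun ω => pairDiffProd S ζ M (ε · ω)) =ᵐ[μ] 0) :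
    ∀ v ∈ pairSupport S ζ M, AEMeasurable (ε v) μ := by
  have hcountable : ∀ v, (Set.range (ε v)).Countable := fun v =>
    ((Set.toFinite {(-1 : ℝ), 1}).subset (Set.range_subset_iff.2 fun ω => by
      rcases hval v ω with h | h <;> simp [h])).countable
  obtain ⟨ω₀, hGω₀, hω₀⟩ := ((Filter.not_eventually.1 hG0).and_eventually
    ((Filter.eventually_all_finset _).2 fun v _ =>
      ae_measure_preimage_singleton_ne_zero (hcountable v))).exists
  intro k hk
  have htwo : ∀ ω, ε k ω = ε k ω₀ ∨ ε k ω = -ε k ω₀ := fun ω =>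
    or_iff_not_imp_left.2 fun h => neg_eq_of_ne_of_sign (hval k ω₀) (hval k ω) (Ne.symm h)
  exact aemeasurable_of_nullMeasurableSet_preimage htwo <|
    hind.nullMeasurableSet_preimage_of_sensitive hGm hω₀ hk
      (fun ω h => dependsOn_pairDiffProd h)
      fun ω h hk' => pairDiffProd_ne_of_flip hSζ (hval · ω₀) (hval · ω) hGω₀ hk h hk'

lemma integral_pairDiffProd_eq_zero_of_aemeasurable (hval : ∀ i ω, ε i ω = -1 ∨ ε i ω = 1)
    {m : ℝ} (hmean : ∀ i, ∫ ω, ε i ω ∂μ = m) (hind : iIndepFun ε μ) (hζ : Set.InjOn ζ S)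
    (hSζ : Disjoint S (S.image ζ)) {a : ι} (ha : a ∈ S) (haM : a ∉ M) (hbM : ζ a ∉ M)
    (hmeas : ∀ v ∈ pairSupport S ζ M, AEMeasurable (ε v) μ) :
    ∫ ω, pairDiffProd S ζ M (ε · ω) ∂μ = 0 := by
  have := hind.isProbabilityMeasure
  have hζa : ζ a ∉ S := fun h => Finset.disjoint_left.1 hSζ h (Finset.mem_image_of_mem ζ ha)
  have hdisj : Disjoint ({a, ζ a} : Finset ι) (pairSupport (S.erase a) ζ M) := by
    simp only [Finset.disjoint_insert_left, Finset.disjoint_singleton_left, pairSupport,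
      Finset.mem_union, Finset.mem_erase, Finset.mem_image, not_or]
    refine ⟨⟨⟨fun h => h.1 rfl, ?_⟩, haM⟩, ⟨fun h => hζa h.2, ?_⟩, hbM⟩
    · rintro ⟨r, hr, hra⟩
      exact Finset.disjoint_left.1 hSζ ha (hra ▸ Finset.mem_image_of_mem ζ hr.2)
    · rintro ⟨r, hr, hra⟩
      exact hr.1 (hζ hr.2 ha hra)
  have hsub : {a, ζ a} ∪ pairSupport (S.erase a) ζ M ⊆ pairSupport S ζ M := by
    intro v hv
    simp only [pairSupport, Finset.mem_union, Finset.mem_insert, Finset.mem_singleton,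
      Finset.mem_image, Finset.mem_erase] at hv ⊢
    grind
  have hmeas' : ∀ v ∈ {a, ζ a} ∪ pairSupport (S.erase a) ζ M, AEMeasurable (ε v) μ :=
    fun v hv => hmeas v (hsub hv)
  have hint : ∀ v ∈ ({a, ζ a} : Finset ι), Integrable (ε v) μ := fun v hv =>
    Integrable.of_bound (hmeas' v (Finset.mem_union_left _ hv)).aestronglyMeasurable 1
      (ae_of_all _ fun ω => by rcases hval v ω with h | h <;> simp [h])
  have hindep := hind.indepFun_of_dependsOn hdisj hmeas'
    (F₁ := fun x => x a - x (ζ a)) (by fun_prop) measurable_pairDiffProd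
    (fun x y h => by simp [h a (by simp), h (ζ a) (by simp)]) dependsOn_pairDiffProd
  simp_rw [pairDiffProd_eq_mul_erase ha]
  rw [hindep.integral_fun_mul_eq_mul_integral
    ((hmeas' a (by simp)).sub (hmeas' (ζ a) (by simp))).aestronglyMeasurable
    (aemeasurable_pairDiffProd fun v hv =>
      hmeas' v (Finset.mem_union_right _ hv)).aestronglyMeasurable,
    integral_sub (hint a (by simp)) (hint (ζ a) (by simp)), hmean, hmean, sub_self, zero_mul]

theorem integral_pairDiffProd_eq_zero (hval : ∀ i ω, ε i ω = -1 ∨ ε i ω = 1)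
    {m : ℝ} (hmean : ∀ i, ∫ ω, ε i ω ∂μ = m) (hind : iIndepFun ε μ) (hζ : Set.InjOn ζ S)
    (hSζ : Disjoint S (S.image ζ)) {a : ι} (ha : a ∈ S) (haM : a ∉ M) (hbM : ζ a ∉ M) :
    ∫ ω, pairDiffProd S ζ M (ε · ω) ∂μ = 0 := by
  by_cases hG0 : (fun ω => pairDiffProd S ζ M (ε · ω)) =ᵐ[μ] 0
  · simp [integral_congr_ae hG0]
  by_cases hGm : AEMeasurable (fun ω => pairDiffProd S ζ M (ε · ω)) μ
  · exact integral_pairDiffProd_eq_zero_of_aemeasurable hval hmean hind hζ hSζ ha haM hbM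
      (hind.aemeasurable_of_pairDiffProd hval hSζ hGm hG0)
  · exact integral_undef fun h => hGm h.aemeasurable

end ProbabilityTheory

theorem stmt_15_general {Ω : Type*} [MeasurableSpace Ω] (μ : Measure Ω)
    (n p : ℕ) (ε : Fin n → Ω → ℝ)
    (hval : ∀ i ω, ε i ω = -1 ∨ ε i ω = 1)
    (m : ℝ) (hmean : ∀ i, ∫ ω, ε i ω ∂μ = m)
    (hind : iIndepFun ε μ)
    (S : Finset (Fin n)) (hS : 3 ≤ S.card) (ζ : Fin n → Fin n)
    (hζinj : Set.InjOn ζ S) (hSζ : Disjoint S (S.image ζ))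
    (η : Fin p → Fin n) (hηinj : Function.Injective η)
    (hηS : ∀ l, η l ∉ S ∧ η l ∉ S.image ζ)
    (ℓ ℓ' : Fin n) (hℓ : ℓ ≠ ℓ') :
    ∫ ω, (∏ r ∈ S, (ε r ω - ε (ζ r) ω)) * (∏ l : Fin p, ε (η l) ω)
        * ε ℓ ω * ε ℓ' ω ∂μ = 0 := by
  set M := Finset.univ.image η ∆ {ℓ, ℓ'}
  have hsq : ∀ i ω, ε i ω * ε i ω = 1 := fun i ω => by rcases hval i ω with h | h <;> simp [h]
  have hintegrand : ∀ ω, (∏ r ∈ S, (ε r ω - ε (ζ r) ω)) * (∏ l : Fin p, ε (η l) ω)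
      * ε ℓ ω * ε ℓ' ω = pairDiffProd S ζ M (ε · ω) := fun ω => by
    rw [pairDiffProd, Finset.prod_symmDiff_of_mul_self_eq_one (hsq · ω),
      Finset.prod_image hηinj.injOn, Finset.prod_pair hℓ]
    ring
  have hM : ∀ v ∉ Finset.univ.image η, v ∉ ({ℓ, ℓ'} : Finset (Fin n)) → v ∉ M :=
    fun v h₁ h₂ h => (Finset.mem_union.1 (symmDiff_le_sup (α := Finset (Fin n)) h)).elim h₁ h₂
  obtain ⟨a, ha, haℓ, hbℓ⟩ := Finset.exists_mem_notMem_of_card_lt hζinj hSζ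
    (Q := {ℓ, ℓ'}) (by have := Finset.card_le_two (a := ℓ) (b := ℓ'); omega)
  simp only [hintegrand]
  refine integral_pairDiffProd_eq_zero hval hmean hind hζinj hSζ ha (hM a ?_ haℓ)
    (hM (ζ a) ?_ hbℓ) <;> simp only [Finset.mem_image, Finset.mem_univ, true_and, not_exists]
  exacts [fun l hl => (hηS l).1 (hl ▸ ha),
    fun l hl => (hηS l).2 (hl ▸ Finset.mem_image_of_mem ζ ha)]

open MeasureTheory ProbabilityTheory in
/-- For `|S| ≥ 3` the first-order cavity term vanishes: any pair `ℓ ≠ ℓ'` can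
touch at most two of the difference factors, leaving a free factor with mean 0. -/
theorem stmt_15 {Ω : Type*} [MeasurableSpace Ω] (μ : Measure Ω)
    [IsProbabilityMeasure μ] (n p : ℕ) (ε : Fin n → Ω → ℝ)
    (hval : ∀ i ω, ε i ω = -1 ∨ ε i ω = 1)
    (m : ℝ) (hmean : ∀ i, ∫ ω, ε i ω ∂μ = m)
    (hind : iIndepFun ε μ)
    (S : Finset (Fin n)) (hS : 3 ≤ S.card) (ζ : Fin n → Fin n)
    (hζinj : Set.InjOn ζ S) (hSζ : Disjoint S (S.image ζ))
    (η : Fin p → Fin n) (hηinj : Function.Injective η)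
    (hηS : ∀ l, η l ∉ S ∧ η l ∉ S.image ζ)
    (ℓ ℓ' : Fin n) (hℓ : ℓ ≠ ℓ') :
    ∫ ω, (∏ r ∈ S, (ε r ω - ε (ζ r) ω)) * (∏ l : Fin p, ε (η l) ω)
        * ε ℓ ω * ε ℓ' ω ∂μ = 0 :=
  stmt_15_general μ n p ε hval m hmean hind S hS ζ hζinj hSζ η hηinj hηS ℓ ℓ' hℓ
end

section
/- Let m ≥ 1 and suppose nonnegative reals x_N (N ≥ 1) satisfy x_N ≤ A·(x_N^{1/(2m+2)} + C'/N)^{2m+1} · L/√N + (Cm/N)^{m+1} for constants A, C, C', L ≥ 0. Then there exists a constant K (depending on A, C, C', L, m) such that x_N ≤ K / N^{m+1} for all sufficiently large N. -/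
open Filter in
/-- Closing the induction step of the moment bounds for truncated multi-overlaps. -/
theorem stmt_17 (m : ℕ) (hm : 1 ≤ m) (x : ℕ → ℝ) (hx : ∀ N, 0 ≤ x N)
    (A C C' L : ℝ) (hA : 0 ≤ A) (hC : 0 ≤ C) (hC' : 0 ≤ C') (hL : 0 ≤ L)
    (hrec : ∀ N : ℕ, 1 ≤ N →
      x N ≤ A * (x N ^ ((1 : ℝ) / (2 * (m : ℝ) + 2)) + C' / (N : ℝ)) ^ (2 * m + 1)
              * L / Real.sqrt N
            + (C * m / (N : ℝ)) ^ (m + 1)) :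
    ∃ K : ℝ, ∀ᶠ N : ℕ in atTop, x N ≤ K / (N : ℝ) ^ (m + 1) := by
  set K : ℝ := 2*(C*(m:ℝ))^(m+1) + (2^(2*m+2)*A*L)^(2*m+2) + C'^(2*m+2) + 1 with hKdef
  have ht1 : 0 ≤ (C*(m:ℝ))^(m+1) := pow_nonneg (mul_nonneg hC (Nat.cast_nonneg m)) _
  have ht2 : 0 ≤ (2^(2*m+2)*A*L)^(2*m+2) :=
    pow_nonneg (mul_nonneg (mul_nonneg (by positivity) hA) hL) _
  have ht3 : 0 ≤ C'^(2*m+2) := pow_nonneg hC' _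
  have hK1 : (1:ℝ) ≤ K := by simp only [hKdef]; linarith
  refine ⟨K, ?_⟩
  filter_upwards [eventually_ge_atTop 1] with N hN
  by_contra hcon
  push_neg at hcon
  have hNr : (1:ℝ) ≤ (N:ℝ) := by exact_mod_cast hN
  have hNpos : (0:ℝ) < N := by linarith
  have hNpow : (0:ℝ) < (N:ℝ)^(m+1) := by positivity
  have hNpow1 : (1:ℝ) ≤ (N:ℝ)^(m+1) := one_le_pow₀ hNr
  have hsq : 0 < Real.sqrt N := Real.sqrt_pos.mpr hNpos
  set y := x N ^ ((1:ℝ)/(2*(m:ℝ)+2)) with hy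
  have hy0 : 0 ≤ y := Real.rpow_nonneg (hx N) _
  have hxpos : 0 < x N := lt_trans (div_pos (by linarith) hNpow) hcon
  have hypos : 0 < y := Real.rpow_pos_of_pos hxpos _
  have hyx : y^(2*m+2) = x N := by
    rw [hy, ← Real.rpow_natCast (x N ^ ((1:ℝ)/(2*(m:ℝ)+2))) (2*m+2),
      ← Real.rpow_mul (hx N)]
    have hne : (2*(m:ℝ)+2) ≠ 0 := by positivity
    rw [show ((2*m+2:ℕ):ℝ) = 2*(m:ℝ)+2 by push_cast; ring, one_div,
      inv_mul_cancel₀ hne, Real.rpow_one]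
  have hKx : K < x N * (N:ℝ)^(m+1) := (div_lt_iff₀ hNpow).mp hcon
  -- C'/N ≤ y
  have hC'y : C'/(N:ℝ) ≤ y := by
    apply le_of_pow_le_pow_left₀ (n := 2*m+2) (by omega) hy0
    rw [hyx, div_pow]
    have h2 : (N:ℝ)^(2*m+2) = (N:ℝ)^(m+1) * (N:ℝ)^(m+1) := by
      rw [← pow_add]; ring_nf
    calc C'^(2*m+2)/(N:ℝ)^(2*m+2) ≤ K/(N:ℝ)^(m+1) := by
          rw [div_le_div_iff₀ (by positivity) hNpow, h2]
          nlinarith [mul_le_mul_of_nonneg_right (show C'^(2*m+2) ≤ K by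
              simp only [hKdef]; linarith) hNpow.le,
            mul_le_mul_of_nonneg_left hNpow1
              (mul_nonneg (by linarith : (0:ℝ) ≤ K) hNpow.le)]
      _ ≤ x N := hcon.le
  -- error term bound
  have h3 : (C*(m:ℝ)/(N:ℝ))^(m+1) ≤ x N / 2 := by
    rw [div_pow, div_le_div_iff₀ hNpow (by norm_num)]
    nlinarith
  -- main inequality
  have hbr : (y + C'/(N:ℝ))^(2*m+1) ≤ (2*y)^(2*m+1) := by
    apply pow_le_pow_left₀ (by positivity)
    linarith
  have hmain : x N ≤ A * (2*y)^(2*m+1) * L / Real.sqrt N + x N / 2 := by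
    calc x N ≤ A * (y + C'/(N:ℝ))^(2*m+1) * L / Real.sqrt N + (C*(m:ℝ)/(N:ℝ))^(m+1) :=
          hrec N hN
      _ ≤ A * (2*y)^(2*m+1) * L / Real.sqrt N + x N / 2 := by
          gcongr
  have hy21 : 0 < y^(2*m+1) := pow_pos hypos _
  have hxy : x N = y * y^(2*m+1) := by
    rw [← hyx, show 2*m+2 = (2*m+1)+1 by omega, pow_succ]; ring
  have hstep : y * y^(2*m+1) ≤ (2^(2*m+2)*A*L/Real.sqrt N) * y^(2*m+1) := by
    have h4 : (2*y)^(2*m+1) = 2^(2*m+1) * y^(2*m+1) := mul_pow _ _ _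
    rw [← hxy, div_mul_eq_mul_div, le_div_iff₀ hsq]
    have h6 : x N / 2 ≤ A * (2^(2*m+1) * y^(2*m+1)) * L / Real.sqrt N := by
      rw [← h4]; linarith
    rw [div_le_div_iff₀ (by norm_num) hsq] at h6
    have h5 : (2:ℝ)^(2*m+2) = 2^(2*m+1) * 2 := pow_succ 2 (2*m+1)
    calc x N * Real.sqrt N ≤ A * (2^(2*m+1) * y^(2*m+1)) * L * 2 := h6
      _ = 2^(2*m+2)*A*L*y^(2*m+1) := by rw [h5]; ring
  have hyb : y ≤ 2^(2*m+2)*A*L/Real.sqrt N :=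
    le_of_mul_le_mul_right (by rw [mul_comm] at hstep ⊢; exact hstep) hy21
  have hfin : x N ≤ (2^(2*m+2)*A*L)^(2*m+2) / (N:ℝ)^(m+1) := by
    have hsqpow : (Real.sqrt N)^(2*m+2) = (N:ℝ)^(m+1) := by
      rw [show 2*m+2 = 2*(m+1) by ring, pow_mul, Real.sq_sqrt hNpos.le]
    calc x N = y^(2*m+2) := hyx.symm
      _ ≤ (2^(2*m+2)*A*L/Real.sqrt N)^(2*m+2) := pow_le_pow_left₀ hy0 hyb _
      _ = (2^(2*m+2)*A*L)^(2*m+2) / (N:ℝ)^(m+1) := by rw [div_pow, hsqpow]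
  have hlt : (2^(2*m+2)*A*L)^(2*m+2) / (N:ℝ)^(m+1) < K / (N:ℝ)^(m+1) := by
    have : ((2:ℝ)^(2*m+2)*A*L)^(2*m+2) < K := by simp only [hKdef]; linarith
    gcongr
  linarith
end
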